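/- arXiv:math/9811143 — 2 statements merged into one kernel-verified Lean document; each statement's English description precedes it below -/
import Mathlib

section
/- Multiplicity-free decomposition of the crystal tensor product: for natural numbers a, b, the set of highest-weight elements {(k, l) : k ≤ a, l ≤ b, ẽ(k, l) = none} equals {(0, l) : 0 ≤ l ≤ min(a, b)}, and the map (0, l) ↦ a + b − 2l is a bijection from this set onto {c ∈ ℕ : |a − b| ≤ c ≤ a + b and c ≡ a + b (mod 2)}. (In spin language: B(j₁) ⊗ B(j₂) decomposes with multiplicity one into components of highest weights J = |j₁−j₂|, |j₁−j₂|+1, …, j₁+j₂.) -/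
/-- Kashiwara's lowering operator `f̃` on the crystal tensor product `B_a ⊗ B_b`,
modeled on pairs `(k, l)` of lowering-step counters (`k ≤ a`, `l ≤ b`):
`f̃(k,l) = (k+1, l)` if `a - k > l`; `f̃(k,l) = (k, l+1)` if `a - k ≤ l` and `l < b`;
`f̃(k,l) = none` otherwise. -/
def ftil (a b : ℕ) (p : ℕ × ℕ) : Option (ℕ × ℕ) :=
  if p.2 < a - p.1 then some (p.1 + 1, p.2)
  else if p.2 < b then some (p.1, p.2 + 1)
  else none

/-- Kashiwara's raising operator `ẽ` on the crystal tensor product `B_a ⊗ B_b`: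
`ẽ(k,l) = (k-1, l)` if `a - k ≥ l` and `k > 0`; `ẽ(k,l) = (k, l-1)` if `a - k < l`;
`ẽ(k,l) = none` otherwise. -/
def etil (a b : ℕ) (p : ℕ × ℕ) : Option (ℕ × ℕ) :=
  if p.2 ≤ a - p.1 ∧ 0 < p.1 then some (p.1 - 1, p.2)
  else if a - p.1 < p.2 then some (p.1, p.2 - 1)
  else none

/-- `n`-fold application of a partially defined crystal operator, propagating `none`. -/
def iterOpt (f : ℕ × ℕ → Option (ℕ × ℕ)) (n : ℕ) (p : ℕ × ℕ) : Option (ℕ × ℕ) :=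
  (fun o => o.bind f)^[n] (some p)

/-!
`ẽ` acts on the first factor when `l ≤ a - k` and on the second when `l > a - k`, so it
can only fail when `k = 0` and `l ≤ a`. The weight of `(0, l)` is `a + b - 2l`, and as `l`
runs over `0, …, min a b` this sweeps the Clebsch–Gordan range `|a - b|, …, a + b` in
steps of two.
-/

theorem etil_eq_none_iff (a b : ℕ) (p : ℕ × ℕ) :
    etil a b p = none ↔ p.1 = 0 ∧ p.2 ≤ a := by
  unfold etil
  split_ifs <;> simp only [false_iff, true_iff, not_and, not_le] <;> omega

theorem setOf_etil_eq_none_eq (a b : ℕ) :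
    {p : ℕ × ℕ | p.1 ≤ a ∧ p.2 ≤ b ∧ etil a b p = none}
      = {p : ℕ × ℕ | p.1 = 0 ∧ p.2 ≤ min a b} := by
  ext p
  simp only [Set.mem_ofPred_eq, etil_eq_none_iff, le_min_iff]
  omega

theorem bijOn_snd_setOf_fst_eq_zero (n : ℕ) :
    Set.BijOn Prod.snd {p : ℕ × ℕ | p.1 = 0 ∧ p.2 ≤ n} (Set.Iic n) := by
  refine ⟨fun p hp => hp.2, ?_, fun l hl => ⟨(0, l), ⟨rfl, hl⟩, rfl⟩⟩
  rintro ⟨k, l⟩ ⟨rfl, -⟩ ⟨k', l'⟩ ⟨rfl, -⟩ (rfl : l = l')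
  rfl

theorem bijOn_add_sub_two_mul (a b : ℕ) :
    Set.BijOn (fun l => a + b - 2 * l) (Set.Iic (min a b))
      {c : ℕ | ((a : ℤ) - (b : ℤ)).natAbs ≤ c ∧ c ≤ a + b ∧ c % 2 = (a + b) % 2} := by
  refine ⟨fun l hl => ?_, fun l hl l' hl' h => ?_, fun c hc => ?_⟩
  · simp only [Set.mem_Iic, le_min_iff] at hl
    simp only [Set.mem_ofPred_eq]
    omega
  · simp only [Set.mem_Iic, le_min_iff] at hl hl'
    simp only at h
    omega
  · simp only [Set.mem_ofPred_eq] at hc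
    refine ⟨(a + b - c) / 2, ?_, ?_⟩
    · simp only [Set.mem_Iic, le_min_iff]
      omega
    · show a + b - 2 * ((a + b - c) / 2) = c
      omega

/-- Multiplicity-free decomposition of the crystal tensor product: the set of
highest-weight elements equals `{(0, l) : l ≤ min a b}`, and `(0, l) ↦ a + b - 2l`
is a bijection from it onto `{c : |a - b| ≤ c ≤ a + b, c ≡ a + b (mod 2)}`. -/
theorem crystal_tensor_decomposition (a b : ℕ) :
    {p : ℕ × ℕ | p.1 ≤ a ∧ p.2 ≤ b ∧ etil a b p = none}
      = {p : ℕ × ℕ | p.1 = 0 ∧ p.2 ≤ min a b} ∧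
    Set.BijOn (fun p : ℕ × ℕ => a + b - 2 * p.2)
      {p : ℕ × ℕ | p.1 = 0 ∧ p.2 ≤ min a b}
      {c : ℕ | ((a : ℤ) - (b : ℤ)).natAbs ≤ c ∧ c ≤ a + b ∧ c % 2 = (a + b) % 2} :=
  ⟨setOf_etil_eq_none_eq a b,
    (bijOn_add_sub_two_mul a b).comp (bijOn_snd_setOf_fst_eq_zero (min a b))⟩
end

section
/- The crystal tensor product is partitioned into chains headed by the highest-weight elements: for natural numbers a, b and every pair (k, l) with k ≤ a and l ≤ b, there exists a unique pair (l₀, n) of natural numbers with l₀ ≤ min(a, b), n ≤ a + b − 2l₀, and f̃ⁿ(0, l₀) = some (k, l). (This is the sl(2) case of Kashiwara's theorem: every vector of the tensor-product crystal basis is a pure state lying in exactly one irreducible component.) -/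
lemma iterOpt_zero (f : ℕ × ℕ → Option (ℕ × ℕ)) (p : ℕ × ℕ) : iterOpt f 0 p = some p :=
  rfl

lemma iterOpt_succ (f : ℕ × ℕ → Option (ℕ × ℕ)) (n : ℕ) (p : ℕ × ℕ) :
    iterOpt f (n + 1) p = (iterOpt f n p).bind f :=
  Function.iterate_succ_apply' _ _ _

def lowerChain (a l₀ n : ℕ) : ℕ × ℕ :=
  if n ≤ a - l₀ then (n, l₀) else (a - l₀, l₀ + (n - (a - l₀)))

section lowerChain

variable {a l₀ n : ℕ}

lemma ftil_lowerChain (b : ℕ) (h : l₀ ≤ a) (hn : n < a + b - 2 * l₀) :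
    ftil a b (lowerChain a l₀ n) = some (lowerChain a l₀ (n + 1)) := by
  unfold ftil lowerChain
  split_ifs <;> simp_all [Prod.ext_iff] <;> omega

lemma iterOpt_ftil_highestWeight (b : ℕ) (h : l₀ ≤ a) (hn : n ≤ a + b - 2 * l₀) :
    iterOpt (ftil a b) n (0, l₀) = some (lowerChain a l₀ n) := by
  induction n with
  | zero => simp [iterOpt_zero, lowerChain]
  | succ n ih =>
    rw [iterOpt_succ, ih (by omega), Option.bind_some, ftil_lowerChain b h (by omega)]

lemma lowerChain_fst_add_snd :
    (lowerChain a l₀ n).1 + (lowerChain a l₀ n).2 = n + l₀ := by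
  unfold lowerChain
  split_ifs <;> omega

lemma min_lowerChain (h : l₀ ≤ a) :
    min (lowerChain a l₀ n).2 (a - (lowerChain a l₀ n).1) = l₀ := by
  unfold lowerChain
  split_ifs <;> simp only <;> omega

end lowerChain

lemma lowerChain_min {a k : ℕ} (l : ℕ) (hk : k ≤ a) :
    lowerChain a (min l (a - k)) (k + l - min l (a - k)) = (k, l) := by
  unfold lowerChain
  split_ifs <;> simp only [Prod.ext_iff] <;> omega

/-- The crystal tensor product is partitioned into chains headed by the
highest-weight elements: every `(k, l)` with `k ≤ a`, `l ≤ b` is reached from a unique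
highest-weight element `(0, l₀)` (with `l₀ ≤ min a b`) by a unique admissible number
`n ≤ a + b - 2·l₀` of lowering steps. -/
theorem crystal_tensor_partition (a b k l : ℕ) (hk : k ≤ a) (hl : l ≤ b) :
    ∃! x : ℕ × ℕ, x.1 ≤ min a b ∧ x.2 ≤ a + b - 2 * x.1 ∧
      iterOpt (ftil a b) x.2 (0, x.1) = some (k, l) := by
  set l₀ := min l (a - k)
  refine ⟨(l₀, k + l - l₀), ⟨by omega, by omega, ?_⟩, ?_⟩
  · rw [iterOpt_ftil_highestWeight b (by omega) (by omega), lowerChain_min l hk]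
  rintro ⟨m₀, n⟩ ⟨hm₀, hn, hchain⟩
  have hm₀a : m₀ ≤ a := hm₀.trans (min_le_left a b)
  rw [iterOpt_ftil_highestWeight b hm₀a hn, Option.some_inj] at hchain
  have hsum := lowerChain_fst_add_snd (a := a) (l₀ := m₀) (n := n)
  have hhead := min_lowerChain (n := n) hm₀a
  rw [hchain] at hsum hhead
  simp only [Prod.mk.injEq] at hsum hhead ⊢
  omega
end
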